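/- Let (x^k, y^k, γ^k) be iterates of the two-block linearized ADMM (Algorithm 1): x^{k+1} is a global minimizer of f̄^k, y^{k+1} is a global minimizer of h̄^k, and γ^{k+1} = γ^k + β(Ax^{k+1} + By^{k+1}), under Assumption 1. Then for every k ≥ 1, m_k − m_{k+1} ≥ (C1 − C3 − C_m)‖y^{k+1} − y^k‖² + (C_m − C4)‖y^k − y^{k−1}‖² + (C0 − C2)‖x^{k+1} − x^k‖², where L_w = L_g + L_h, L_A is the largest eigenvalue of AᵀA, λ_{BᵀB} is the smallest eigenvalue of BᵀB, C0 = (L_x − L_g − βL_A)/2, C1 = (2L_y − L_w)/2, C2 = 3L_w²/(βλ_{BᵀB}), C3 = 3L_y²/(βλ_{BᵀB}), C4 = 3(L_w² + L_y²)/(βλ_{BᵀB}), and m_k = L_β(x^k, y^k, γ^k) + C_m‖y^k − y^{k−1}‖² for a constant C_m ∈ ℝ. -/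

import Mathlib

open Matrix Filter
open scoped RealInnerProductSpace

noncomputable section

abbrev Vec (m : ℕ) := EuclideanSpace ℝ (Fin m)

def mv {m l : ℕ} (M : Matrix (Fin m) (Fin l) ℝ) (v : Vec l) : Vec m := WithLp.toLp 2 (M.mulVec v)

def gradx {p q : ℕ} (g : Vec p → Vec q → ℝ) (x : Vec p) (y : Vec q) : Vec p :=
  gradient (fun x' => g x' y) x

def grady {p q : ℕ} (g : Vec p → Vec q → ℝ) (x : Vec p) (y : Vec q) : Vec q :=
  gradient (g x) y

def LipschitzDifferentiable {m : ℕ} (h : Vec m → ℝ) (L : ℝ) : Prop :=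
  Differentiable ℝ h ∧ ∀ y y' : Vec m, ‖gradient h y - gradient h y'‖ ≤ L * ‖y - y'‖

def LipschitzDifferentiable2 {p q : ℕ} (g : Vec p → Vec q → ℝ) (L : ℝ) : Prop :=
  (∀ y, Differentiable ℝ fun x => g x y) ∧ (∀ x, Differentiable ℝ (g x)) ∧
    ∀ x x' : Vec p, ∀ y y' : Vec q,
      Real.sqrt (‖gradx g x y - gradx g x' y'‖ ^ 2 + ‖grady g x y - grady g x' y'‖ ^ 2) ≤
        L * Real.sqrt (‖x - x'‖ ^ 2 + ‖y - y'‖ ^ 2)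

def Lagr {p q n : ℕ} (β : ℝ) (g : Vec p → Vec q → ℝ) (f : Vec p → ℝ) (h : Vec q → ℝ)
    (A : Matrix (Fin n) (Fin p) ℝ) (B : Matrix (Fin n) (Fin q) ℝ)
    (x : Vec p) (y : Vec q) (γ : Vec n) : ℝ :=
  g x y + f x + h y + ⟪γ, mv A x + mv B y⟫ + β / 2 * ‖mv A x + mv B y‖ ^ 2

def fbar {p q n : ℕ} (f : Vec p → ℝ) (g : Vec p → Vec q → ℝ)
    (A : Matrix (Fin n) (Fin p) ℝ) (B : Matrix (Fin n) (Fin q) ℝ) (β Lx : ℝ)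
    (xk : Vec p) (yk : Vec q) (γk : Vec n) (x : Vec p) : ℝ :=
  f x + ⟪γk, mv A x⟫ + Lx / 2 * ‖x - xk‖ ^ 2 +
    ⟪x - xk, gradx g xk yk + β • mv Aᵀ (mv A xk + mv B yk)⟫

def hbar {p q n : ℕ} (g : Vec p → Vec q → ℝ) (h : Vec q → ℝ)
    (A : Matrix (Fin n) (Fin p) ℝ) (B : Matrix (Fin n) (Fin q) ℝ) (β Ly : ℝ)
    (xk1 : Vec p) (yk : Vec q) (γk : Vec n) (y : Vec q) : ℝ :=
  ⟪γk, mv B y⟫ + Ly / 2 * ‖y - yk‖ ^ 2 + β / 2 * ‖mv A xk1 + mv B y‖ ^ 2 +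
    ⟪y - yk, grady g xk1 yk + gradient h yk⟫

def IsSmallestEigenvalue {m : ℕ} (M : Matrix (Fin m) (Fin m) ℝ) (lam : ℝ) : Prop :=
  (∃ v : Fin m → ℝ, v ≠ 0 ∧ M.mulVec v = lam • v) ∧
    ∀ μ : ℝ, (∃ v : Fin m → ℝ, v ≠ 0 ∧ M.mulVec v = μ • v) → lam ≤ μ

def IsLargestEigenvalue {m : ℕ} (M : Matrix (Fin m) (Fin m) ℝ) (lam : ℝ) : Prop :=
  (∃ v : Fin m → ℝ, v ≠ 0 ∧ M.mulVec v = lam • v) ∧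
    ∀ μ : ℝ, (∃ v : Fin m → ℝ, v ≠ 0 ∧ M.mulVec v = μ • v) → μ ≤ lam

def RegularSubgradientAt {m : ℕ} (f : Vec m → ℝ) (x₀ v : Vec m) : Prop :=
  ∀ ε > 0, ∀ᶠ x in nhds x₀, f x₀ + ⟪v, x - x₀⟫ - ε * ‖x - x₀‖ ≤ f x

/-!
The augmented Lagrangian is followed through the three updates of one iteration.

* The `x`-step lowers it by `(Lx - Lg - β L_A)/2 ‖Δx‖²`: compare the minimality of `x^{k+1}` for
  `f̄^k` against the point `x^k`, and bound `g(·, y^k)` by the descent lemma and `‖A Δx‖²` by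
  `L_A ‖Δx‖²`.
* The `y`-step lowers it by `(2 Ly - L_w)/2 ‖Δy‖²`: `h̄^k` is a quadratic minimised at `y^{k+1}`,
  so `h̄^k(y^k) = h̄^k(y^{k+1}) + Ly/2 ‖Δy‖² + β/2 ‖B Δy‖²`, and `g(x^{k+1}, ·)`, `h` obey the
  descent lemma.
* The dual step raises it by `β ‖r‖²`, `r = A x^{k+1} + B y^{k+1}`. The first-order condition of the
  `y`-step together with the dual update gives
  `Bᵀ γ^{k+1} = -(Ly (y^{k+1} - y^k) + ∇_y g(x^{k+1}, y^k) + ∇h(y^k))`, so `β Bᵀ r`, a difference of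
  two such expressions, is controlled by the Lipschitz constants. Since `r ∈ Im B`,
  `λ_{BᵀB} ‖r‖² ≤ ‖Bᵀ r‖²`, which bounds `β ‖r‖²`.

The `Cm` terms cancel in the difference `m_k - m_{k+1}`.
-/

lemma mv_eq_toEuclideanLin {m l : ℕ} (M : Matrix (Fin m) (Fin l) ℝ) :
    mv M = Matrix.toEuclideanLin M := rfl

@[simp] lemma mv_add {m l : ℕ} (M : Matrix (Fin m) (Fin l) ℝ) (a b : Vec l) :
    mv M (a + b) = mv M a + mv M b := by
  simp [mv_eq_toEuclideanLin]

@[simp] lemma mv_sub {m l : ℕ} (M : Matrix (Fin m) (Fin l) ℝ) (a b : Vec l) :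
    mv M (a - b) = mv M a - mv M b := by
  simp [mv_eq_toEuclideanLin]

@[simp] lemma mv_smul {m l : ℕ} (M : Matrix (Fin m) (Fin l) ℝ) (t : ℝ) (a : Vec l) :
    mv M (t • a) = t • mv M a := by
  simp [mv_eq_toEuclideanLin]

lemma mv_mv {m l k : ℕ} (M : Matrix (Fin m) (Fin l) ℝ) (N : Matrix (Fin l) (Fin k) ℝ)
    (v : Vec k) : mv M (mv N v) = mv (M * N) v := by
  simp [mv, Matrix.mulVec_mulVec]

lemma inner_mv {m l : ℕ} (M : Matrix (Fin m) (Fin l) ℝ) (u : Vec m) (v : Vec l) :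
    ⟪u, mv M v⟫ = ⟪mv Mᵀ u, v⟫ := by
  simp only [mv, EuclideanSpace.inner_eq_star_dotProduct, star_trivial]
  rw [Matrix.mulVec_transpose, dotProduct_comm, Matrix.dotProduct_mulVec, dotProduct_comm]

lemma sq_norm_mv {m l : ℕ} (M : Matrix (Fin m) (Fin l) ℝ) (v : Vec l) :
    ‖mv M v‖ ^ 2 = ⟪mv (Mᵀ * M) v, v⟫ := by
  rw [← real_inner_self_eq_norm_sq, inner_mv, mv_mv]

lemma Matrix.IsHermitian.posSemidef_of_eigenvalue_nonneg {m : ℕ} {N : Matrix (Fin m) (Fin m) ℝ}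
    (hN : N.IsHermitian)
    (h : ∀ μ : ℝ, (∃ v : Fin m → ℝ, v ≠ 0 ∧ N.mulVec v = μ • v) → 0 ≤ μ) : N.PosSemidef :=
  hN.posSemidef_iff_eigenvalues_nonneg.mpr fun i => h _ ⟨_,
    fun h0 => hN.eigenvectorBasis.orthonormal.ne_zero i
      (by simpa using congrArg (WithLp.toLp 2) h0),
    hN.mulVec_eigenvectorBasis i⟩

lemma Matrix.PosSemidef.inner_mv_nonneg {m : ℕ} {N : Matrix (Fin m) (Fin m) ℝ}
    (hN : N.PosSemidef) (v : Vec m) : 0 ≤ ⟪mv N v, v⟫ := by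
  simpa [mv, EuclideanSpace.inner_eq_star_dotProduct, dotProduct_comm]
    using hN.re_dotProduct_nonneg v.ofLp

lemma IsLargestEigenvalue.inner_mv_le {m : ℕ} {M : Matrix (Fin m) (Fin m) ℝ} {lam : ℝ}
    (hM : M.IsHermitian) (hl : IsLargestEigenvalue M lam) (v : Vec m) :
    ⟪mv M v, v⟫ ≤ lam * ‖v‖ ^ 2 := by
  have hpsd : (lam • 1 - M).PosSemidef := by
    refine ((Matrix.isHermitian_one.smul (IsSelfAdjoint.all lam)).sub hM
      ).posSemidef_of_eigenvalue_nonneg ?_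
    rintro μ ⟨w, hw, hμ⟩
    have : M.mulVec w = (lam - μ) • w := by
      rw [Matrix.sub_mulVec, Matrix.smul_mulVec, Matrix.one_mulVec] at hμ
      rw [sub_smul, ← hμ]; abel
    linarith [hl.2 _ ⟨w, hw, this⟩]
  simpa [mv, Matrix.sub_mulVec, Matrix.smul_mulVec, inner_sub_left, real_inner_smul_left,
    real_inner_self_eq_norm_sq] using hpsd.inner_mv_nonneg v

lemma IsSmallestEigenvalue.neg {m : ℕ} {M : Matrix (Fin m) (Fin m) ℝ} {lam : ℝ}
    (hl : IsSmallestEigenvalue M lam) : IsLargestEigenvalue (-M) (-lam) := by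
  obtain ⟨⟨v, hv, hMv⟩, hmin⟩ := hl
  refine ⟨⟨v, hv, by rw [Matrix.neg_mulVec, hMv, neg_smul]⟩, fun μ ⟨w, hw, hμ⟩ => ?_⟩
  have : M.mulVec w = (-μ) • w := by rw [neg_smul, ← hμ, Matrix.neg_mulVec, neg_neg]
  linarith [hmin _ ⟨w, hw, this⟩]

lemma IsSmallestEigenvalue.le_inner_mv {m : ℕ} {M : Matrix (Fin m) (Fin m) ℝ} {lam : ℝ}
    (hM : M.IsHermitian) (hl : IsSmallestEigenvalue M lam) (v : Vec m) :
    lam * ‖v‖ ^ 2 ≤ ⟪mv M v, v⟫ := by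
  have := hl.neg.inner_mv_le hM.neg v
  simp only [mv, Matrix.neg_mulVec, WithLp.toLp_neg, inner_neg_left] at this
  simp only [mv]
  linarith

lemma sq_norm_mv_le {n p : ℕ} {A : Matrix (Fin n) (Fin p) ℝ} {LA : ℝ}
    (hLA : IsLargestEigenvalue (Aᵀ * A) LA) (v : Vec p) : ‖mv A v‖ ^ 2 ≤ LA * ‖v‖ ^ 2 := by
  rw [sq_norm_mv]
  exact hLA.inner_mv_le (by simpa using Matrix.isHermitian_conjTranspose_mul_self A) v

lemma le_sq_norm_mv {n q : ℕ} {B : Matrix (Fin n) (Fin q) ℝ} {lam : ℝ}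
    (hlam : IsSmallestEigenvalue (Bᵀ * B) lam) (v : Vec q) : lam * ‖v‖ ^ 2 ≤ ‖mv B v‖ ^ 2 := by
  rw [sq_norm_mv]
  exact hlam.le_inner_mv (by simpa using Matrix.isHermitian_conjTranspose_mul_self B) v

lemma Matrix.mulVec_injective_of_rank_eq {n q : ℕ} {B : Matrix (Fin n) (Fin q) ℝ}
    (hB : B.rank = q) : Function.Injective B.mulVec := by
  have hdim := LinearMap.finrank_range_add_finrank_ker B.mulVecLin
  rw [← Matrix.rank, hB, Module.finrank_fin_fun] at hdim
  have hker : LinearMap.ker B.mulVecLin = ⊥ := Submodule.finrank_eq_zero.mp (by omega)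
  exact LinearMap.ker_eq_bot.mp hker

lemma IsSmallestEigenvalue.pos_of_rank_eq {n q : ℕ} {B : Matrix (Fin n) (Fin q) ℝ} {lam : ℝ}
    (hlam : IsSmallestEigenvalue (Bᵀ * B) lam) (hB : B.rank = q) : 0 < lam := by
  obtain ⟨v, hv, hveq⟩ := hlam.1
  have hBv : mv B (WithLp.toLp 2 v) ≠ 0 := fun h0 =>
    hv (Matrix.mulVec_injective_of_rank_eq hB (by simpa [mv] using h0))
  have hv' : WithLp.toLp 2 v ≠ (0 : Vec q) := by simpa using hv
  have : ‖mv B (WithLp.toLp 2 v)‖ ^ 2 = lam * ‖WithLp.toLp 2 v‖ ^ 2 := by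
    rw [sq_norm_mv, show mv (Bᵀ * B) (WithLp.toLp 2 v) = lam • WithLp.toLp 2 v by simp [mv, hveq],
      real_inner_smul_left, real_inner_self_eq_norm_sq]
  have hpos : 0 < lam * ‖WithLp.toLp 2 v‖ ^ 2 := this ▸ pow_pos (norm_pos_iff.mpr hBv) 2
  exact pos_of_mul_pos_left hpos (sq_nonneg _)

lemma mul_sq_norm_le_sq_norm_mv_transpose {n q : ℕ} {B : Matrix (Fin n) (Fin q) ℝ} {lam : ℝ}
    (hlam : IsSmallestEigenvalue (Bᵀ * B) lam) (hlam0 : 0 ≤ lam) {w : Vec n}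
    (hw : w ∈ Set.range (mv B)) : lam * ‖w‖ ^ 2 ≤ ‖mv Bᵀ w‖ ^ 2 := by
  obtain ⟨z, rfl⟩ := hw
  have hlow := le_sq_norm_mv hlam z
  have hcs : ‖mv B z‖ ^ 2 ≤ ‖mv Bᵀ (mv B z)‖ * ‖z‖ := by
    rw [← real_inner_self_eq_norm_sq, inner_mv]
    exact real_inner_le_norm _ _
  nlinarith [sq_nonneg (‖mv Bᵀ (mv B z)‖ - lam * ‖z‖), norm_nonneg z, norm_nonneg (mv Bᵀ (mv B z)),
    mul_nonneg hlam0 (norm_nonneg z)]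

lemma LipschitzDifferentiable.nonneg {m : ℕ} {φ : Vec m → ℝ} {L : ℝ}
    (hφ : LipschitzDifferentiable φ L) {a b : Vec m} (hab : a ≠ b) : 0 ≤ L :=
  nonneg_of_mul_nonneg_left ((norm_nonneg _).trans (hφ.2 a b))
    (norm_pos_iff.mpr (sub_ne_zero.mpr hab))

lemma LipschitzDifferentiable.le_add_inner_add_sq {m : ℕ} {φ : Vec m → ℝ} {L : ℝ}
    (hφ : LipschitzDifferentiable φ L) (a b : Vec m) :
    φ b ≤ φ a + ⟪gradient φ a, b - a⟫ + L / 2 * ‖b - a‖ ^ 2 := by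
  set v := b - a
  let ψ : ℝ → ℝ := fun t => φ (a + t • v) - t * ⟪gradient φ a, v⟫ - L / 2 * t ^ 2 * ‖v‖ ^ 2
  have hψ : ∀ t, HasDerivAt ψ
      (⟪gradient φ (a + t • v), v⟫ - ⟪gradient φ a, v⟫ - L * t * ‖v‖ ^ 2) t := by
    intro t
    have hline : HasDerivAt (fun s : ℝ => a + s • v) v t := by
      simpa using ((hasDerivAt_id t).smul_const v).const_add a
    have hcomp := ((hφ.1 _).hasGradientAt.hasFDerivAt).comp_hasDerivAt t hline
    rw [InnerProductSpace.toDual_apply_apply] at hcomp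
    exact ((hcomp.sub ((hasDerivAt_id t).mul_const ⟪gradient φ a, v⟫)).sub
      (((hasDerivAt_pow 2 t).const_mul (L / 2)).mul_const (‖v‖ ^ 2))).congr_deriv
      (by push_cast; ring)
  have hψ_nonpos : ∀ t ∈ interior (Set.Icc (0 : ℝ) 1),
      ⟪gradient φ (a + t • v), v⟫ - ⟪gradient φ a, v⟫ - L * t * ‖v‖ ^ 2 ≤ 0 := by
    intro t ht
    rw [interior_Icc] at ht
    have hlip : ‖gradient φ (a + t • v) - gradient φ a‖ ≤ L * (t * ‖v‖) := by
      simpa [norm_smul, abs_of_pos ht.1] using hφ.2 (a + t • v) a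
    have hcs := real_inner_le_norm (gradient φ (a + t • v) - gradient φ a) v
    rw [inner_sub_left] at hcs
    nlinarith [norm_nonneg v]
  have hanti : AntitoneOn ψ (Set.Icc 0 1) :=
    antitoneOn_of_hasDerivWithinAt_nonpos (convex_Icc 0 1)
      (fun t _ => (hψ t).continuousAt.continuousWithinAt)
      (fun t _ => (hψ t).hasDerivWithinAt) hψ_nonpos
  have := hanti (by simp) (by simp) zero_le_one
  simp only [ψ, one_smul, zero_smul, add_zero, one_pow, zero_mul, one_mul, sub_zero, v,
    add_sub_cancel, ne_eq, OfNat.ofNat_ne_zero, not_false_eq_true, zero_pow, mul_zero,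
    mul_one] at this
  linarith

lemma LipschitzDifferentiable2.norm_gradx_sub_le {p q : ℕ} {g : Vec p → Vec q → ℝ} {L : ℝ}
    (hg : LipschitzDifferentiable2 g L) (x x' : Vec p) (y y' : Vec q) :
    ‖gradx g x y - gradx g x' y'‖ ≤ L * √(‖x - x'‖ ^ 2 + ‖y - y'‖ ^ 2) :=
  (Real.le_sqrt_of_sq_le (le_add_of_nonneg_right (sq_nonneg _))).trans (hg.2.2 x x' y y')

lemma LipschitzDifferentiable2.norm_grady_sub_le {p q : ℕ} {g : Vec p → Vec q → ℝ} {L : ℝ}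
    (hg : LipschitzDifferentiable2 g L) (x x' : Vec p) (y y' : Vec q) :
    ‖grady g x y - grady g x' y'‖ ≤ L * √(‖x - x'‖ ^ 2 + ‖y - y'‖ ^ 2) :=
  (Real.le_sqrt_of_sq_le (le_add_of_nonneg_left (sq_nonneg _))).trans (hg.2.2 x x' y y')

lemma LipschitzDifferentiable2.left {p q : ℕ} {g : Vec p → Vec q → ℝ} {L : ℝ}
    (hg : LipschitzDifferentiable2 g L) (y : Vec q) : LipschitzDifferentiable (g · y) L :=
  ⟨hg.1 y, fun x x' => by simpa [gradx, Real.sqrt_sq_eq_abs] using hg.norm_gradx_sub_le x x' y y⟩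

lemma LipschitzDifferentiable2.right {p q : ℕ} {g : Vec p → Vec q → ℝ} {L : ℝ}
    (hg : LipschitzDifferentiable2 g L) (x : Vec p) : LipschitzDifferentiable (g x) L :=
  ⟨hg.2.1 x, fun y y' => by simpa [grady, Real.sqrt_sq_eq_abs] using hg.norm_grady_sub_le x x y y'⟩

lemma eq_zero_of_forall_mul_add_sq_mul_nonneg {c s : ℝ} (h : ∀ t : ℝ, 0 ≤ t * c + t ^ 2 * s) :
    c = 0 := by
  set u := |s| + 1
  have hu : 0 < u := by positivity
  have hscaled : u ^ 2 * ((-c / u) * c + (-c / u) ^ 2 * s) = c ^ 2 * (s - u) := by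
    field_simp; ring
  have : 0 ≤ c ^ 2 * (s - u) := hscaled ▸ mul_nonneg (sq_nonneg u) (h (-c / u))
  nlinarith [le_abs_self s, sq_nonneg c]

lemma norm_add₃_sq_le {E : Type*} [SeminormedAddCommGroup E] (a b c : E) :
    ‖a + b + c‖ ^ 2 ≤ 3 * (‖a‖ ^ 2 + ‖b‖ ^ 2 + ‖c‖ ^ 2) := by
  have := norm_add₃_le (a := a) (b := b) (c := c)
  nlinarith [norm_nonneg (a + b + c), sq_nonneg (‖a‖ - ‖b‖), sq_nonneg (‖a‖ - ‖c‖),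
    sq_nonneg (‖b‖ - ‖c‖)]

def hbarGradient {p q n : ℕ} (g : Vec p → Vec q → ℝ) (h : Vec q → ℝ)
    (A : Matrix (Fin n) (Fin p) ℝ) (B : Matrix (Fin n) (Fin q) ℝ) (β Ly : ℝ)
    (xk1 : Vec p) (yk : Vec q) (γk : Vec n) (y : Vec q) : Vec q :=
  mv Bᵀ γk + β • mv Bᵀ (mv A xk1 + mv B y) + Ly • (y - yk) + grady g xk1 yk + gradient h yk

lemma hbar_add_smul {p q n : ℕ} (g : Vec p → Vec q → ℝ) (h : Vec q → ℝ)
    (A : Matrix (Fin n) (Fin p) ℝ) (B : Matrix (Fin n) (Fin q) ℝ) (β Ly : ℝ)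
    (xk1 : Vec p) (yk : Vec q) (γk : Vec n) (y d : Vec q) (t : ℝ) :
    hbar g h A B β Ly xk1 yk γk (y + t • d) =
      hbar g h A B β Ly xk1 yk γk y + t * ⟪hbarGradient g h A B β Ly xk1 yk γk y, d⟫ +
        t ^ 2 * (Ly / 2 * ‖d‖ ^ 2 + β / 2 * ‖mv B d‖ ^ 2) := by
  have hy : y + t • d - yk = (y - yk) + t • d := by abel
  simp only [hbar, hbarGradient, hy, norm_add_sq_real, norm_smul, mul_pow, Real.norm_eq_abs,
    sq_abs, mv_add, mv_smul, inner_add_left, inner_add_right, real_inner_smul_left,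
    real_inner_smul_right, ← inner_mv, real_inner_comm (grady g xk1 yk),
    real_inner_comm (gradient h yk)]
  ring

section Iteration

variable {p q n : ℕ} {A : Matrix (Fin n) (Fin p) ℝ} {B : Matrix (Fin n) (Fin q) ℝ}
  {g : Vec p → Vec q → ℝ} {f : Vec p → ℝ} {h : Vec q → ℝ} {β Lx Ly Lg Lh : ℝ}

lemma hbarGradient_eq_zero_of_isMin {xk1 : Vec p} {yk y : Vec q} {γk : Vec n}
    (hmin : ∀ y', hbar g h A B β Ly xk1 yk γk y ≤ hbar g h A B β Ly xk1 yk γk y') :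
    hbarGradient g h A B β Ly xk1 yk γk y = 0 := by
  set G := hbarGradient g h A B β Ly xk1 yk γk y
  have hquad : ∀ t : ℝ, 0 ≤ t * ⟪G, G⟫ + t ^ 2 * (Ly / 2 * ‖G‖ ^ 2 + β / 2 * ‖mv B G‖ ^ 2) :=
    fun t => by linarith [hmin (y + t • G), hbar_add_smul g h A B β Ly xk1 yk γk y G t]
  exact inner_self_eq_zero.mp (eq_zero_of_forall_mul_add_sq_mul_nonneg hquad)

lemma hbar_add_sq_le_of_isMin (hβ : 0 ≤ β) {xk1 : Vec p} {yk y : Vec q} {γk : Vec n}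
    (hmin : ∀ y', hbar g h A B β Ly xk1 yk γk y ≤ hbar g h A B β Ly xk1 yk γk y') :
    hbar g h A B β Ly xk1 yk γk y + Ly / 2 * ‖y - yk‖ ^ 2 ≤ hbar g h A B β Ly xk1 yk γk yk := by
  have hexp := hbar_add_smul g h A B β Ly xk1 yk γk y (yk - y) 1
  rw [one_smul, add_sub_cancel, hbarGradient_eq_zero_of_isMin hmin, inner_zero_left,
    norm_sub_rev] at hexp
  nlinarith [sq_nonneg ‖mv B (yk - y)‖]

lemma mv_transpose_dual_eq {xk1 : Vec p} {yk yk1 : Vec q} {γk γk1 : Vec n}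
    (hmin : ∀ y', hbar g h A B β Ly xk1 yk γk yk1 ≤ hbar g h A B β Ly xk1 yk γk y')
    (hγ : γk1 = γk + β • (mv A xk1 + mv B yk1)) :
    mv Bᵀ γk1 = -(Ly • (yk1 - yk) + grady g xk1 yk + gradient h yk) := by
  have hG := hbarGradient_eq_zero_of_isMin hmin
  rw [hbarGradient] at hG
  rw [hγ, mv_add, mv_smul, eq_neg_iff_add_eq_zero, ← hG]
  abel

lemma lagr_x_update_le {LA : ℝ} (hg : LipschitzDifferentiable2 g Lg)
    (hLA : IsLargestEigenvalue (Aᵀ * A) LA) (hβ : 0 ≤ β) {xk xk1 : Vec p} {yk : Vec q}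
    {γk : Vec n} (hmin : fbar f g A B β Lx xk yk γk xk1 ≤ fbar f g A B β Lx xk yk γk xk) :
    Lagr β g f h A B xk1 yk γk ≤
      Lagr β g f h A B xk yk γk - (Lx - Lg - β * LA) / 2 * ‖xk1 - xk‖ ^ 2 := by
  have hdescent : g xk1 yk ≤ g xk yk + ⟪gradx g xk yk, xk1 - xk⟫ + Lg / 2 * ‖xk1 - xk‖ ^ 2 :=
    (hg.left yk).le_add_inner_add_sq xk xk1
  have hres : ‖mv A xk1 + mv B yk‖ ^ 2 =
      ‖mv A xk + mv B yk‖ ^ 2 + 2 * ⟪mv Aᵀ (mv A xk + mv B yk), xk1 - xk⟫ +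
        ‖mv A (xk1 - xk)‖ ^ 2 := by
    rw [← inner_mv, ← norm_add_sq_real, mv_sub]
    congr 2; abel
  have hA := mul_le_mul_of_nonneg_left (sq_norm_mv_le hLA (xk1 - xk)) hβ
  simp only [fbar, sub_self, norm_zero, inner_zero_left, ne_eq, OfNat.ofNat_ne_zero,
    not_false_eq_true, zero_pow, mul_zero, add_zero, real_inner_comm _ (xk1 - xk),
    inner_add_left, real_inner_smul_left] at hmin
  simp only [Lagr, inner_add_right, hres]
  nlinarith

lemma lagr_y_update_le (hg : LipschitzDifferentiable2 g Lg) (hh : LipschitzDifferentiable h Lh)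
    (hβ : 0 ≤ β) {xk1 : Vec p} {yk yk1 : Vec q} {γk : Vec n}
    (hmin : ∀ y', hbar g h A B β Ly xk1 yk γk yk1 ≤ hbar g h A B β Ly xk1 yk γk y') :
    Lagr β g f h A B xk1 yk1 γk ≤
      Lagr β g f h A B xk1 yk γk - (2 * Ly - (Lg + Lh)) / 2 * ‖yk1 - yk‖ ^ 2 := by
  have hg_descent := (hg.right xk1).le_add_inner_add_sq yk yk1
  have hh_descent := hh.le_add_inner_add_sq yk yk1
  have hsub := hbar_add_sq_le_of_isMin hβ hmin
  simp only [hbar, sub_self, norm_zero, inner_zero_left, ne_eq, OfNat.ofNat_ne_zero,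
    not_false_eq_true, zero_pow, mul_zero, add_zero, real_inner_comm _ (yk1 - yk),
    inner_add_left] at hsub
  simp only [Lagr, inner_add_right]
  unfold grady at hsub
  linarith

lemma lagr_dual_update (x : Vec p) (y : Vec q) (γ : Vec n) :
    Lagr β g f h A B x y (γ + β • (mv A x + mv B y)) =
      Lagr β g f h A B x y γ + β * ‖mv A x + mv B y‖ ^ 2 := by
  rw [Lagr, Lagr, inner_add_left, real_inner_smul_left, real_inner_self_eq_norm_sq]
  ring

lemma sq_norm_grady_add_gradient_sub_le (hg : LipschitzDifferentiable2 g Lg)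
    (hh : LipschitzDifferentiable h Lh) (hLh : 0 ≤ Lh) (x x' : Vec p) (y y' : Vec q) :
    ‖(grady g x y - grady g x' y') + (gradient h y - gradient h y')‖ ^ 2 ≤
      (Lg + Lh) ^ 2 * (‖x - x'‖ ^ 2 + ‖y - y'‖ ^ 2) := by
  have hy : ‖y - y'‖ ≤ √(‖x - x'‖ ^ 2 + ‖y - y'‖ ^ 2) :=
    Real.le_sqrt_of_sq_le (le_add_of_nonneg_left (sq_nonneg _))
  have hsum := (norm_add_le _ _).trans
    (add_le_add (hg.norm_grady_sub_le x x' y y')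
      ((hh.2 y y').trans (mul_le_mul_of_nonneg_left hy hLh)))
  calc _ ≤ ((Lg + Lh) * √(‖x - x'‖ ^ 2 + ‖y - y'‖ ^ 2)) ^ 2 :=
        pow_le_pow_left₀ (norm_nonneg _) (by linarith) 2
    _ = _ := by rw [mul_pow, Real.sq_sqrt (by positivity)]

lemma mul_sq_norm_residual_le {lamB : ℝ} (hg : LipschitzDifferentiable2 g Lg)
    (hh : LipschitzDifferentiable h Lh) (hLh : 0 ≤ Lh)
    (hlamB : IsSmallestEigenvalue (Bᵀ * B) lamB) (hlam0 : 0 < lamB) (hβ : 0 < β)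
    (himg : Set.range (mv A) ⊆ Set.range (mv B)) {xk1 xk2 : Vec p} {yk yk1 yk2 : Vec q}
    {γk1 γk2 : Vec n}
    (hdual1 : mv Bᵀ γk1 = -(Ly • (yk1 - yk) + grady g xk1 yk + gradient h yk))
    (hdual2 : mv Bᵀ γk2 = -(Ly • (yk2 - yk1) + grady g xk2 yk1 + gradient h yk1))
    (hγ : γk2 = γk1 + β • (mv A xk2 + mv B yk2)) :
    β * ‖mv A xk2 + mv B yk2‖ ^ 2 ≤
      3 * Ly ^ 2 / (β * lamB) * ‖yk2 - yk1‖ ^ 2 +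
        3 * ((Lg + Lh) ^ 2 + Ly ^ 2) / (β * lamB) * ‖yk1 - yk‖ ^ 2 +
        3 * (Lg + Lh) ^ 2 / (β * lamB) * ‖xk2 - xk1‖ ^ 2 := by
  set r := mv A xk2 + mv B yk2
  have hmem : r ∈ Set.range (mv B) := by
    obtain ⟨z, hz⟩ := himg ⟨xk2, rfl⟩
    exact ⟨z + yk2, by rw [mv_add, hz]⟩
  have hlow := mul_sq_norm_le_sq_norm_mv_transpose hlamB hlam0.le hmem
  have hBr : β • mv Bᵀ r = (-Ly) • (yk2 - yk1) + Ly • (yk1 - yk) +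
      ((grady g xk1 yk - grady g xk2 yk1) + (gradient h yk - gradient h yk1)) := by
    have : β • mv Bᵀ r = mv Bᵀ γk2 - mv Bᵀ γk1 := by
      rw [hγ, mv_add Bᵀ γk1, mv_smul, add_sub_cancel_left]
    rw [this, hdual1, hdual2]
    module
  have hup : β ^ 2 * ‖mv Bᵀ r‖ ^ 2 ≤ 3 * (Ly ^ 2 * ‖yk2 - yk1‖ ^ 2 + Ly ^ 2 * ‖yk1 - yk‖ ^ 2 +
      (Lg + Lh) ^ 2 * (‖xk2 - xk1‖ ^ 2 + ‖yk1 - yk‖ ^ 2)) := by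
    have hgrad := sq_norm_grady_add_gradient_sub_le hg hh hLh xk1 xk2 yk yk1
    rw [norm_sub_rev xk1, norm_sub_rev yk] at hgrad
    calc β ^ 2 * ‖mv Bᵀ r‖ ^ 2 = ‖β • mv Bᵀ r‖ ^ 2 := by
          rw [norm_smul, mul_pow, Real.norm_eq_abs, sq_abs]
      _ ≤ 3 * (‖(-Ly) • (yk2 - yk1)‖ ^ 2 + ‖Ly • (yk1 - yk)‖ ^ 2 +
          ‖(grady g xk1 yk - grady g xk2 yk1) + (gradient h yk - gradient h yk1)‖ ^ 2) :=
        hBr ▸ norm_add₃_sq_le _ _ _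
      _ ≤ _ := by
        simp only [norm_smul, mul_pow, Real.norm_eq_abs, sq_abs, neg_sq]
        gcongr
  calc β * ‖r‖ ^ 2 = β ^ 2 * (lamB * ‖r‖ ^ 2) / (β * lamB) := by field_simp
    _ ≤ β ^ 2 * ‖mv Bᵀ r‖ ^ 2 / (β * lamB) := by gcongr
    _ ≤ 3 * (Ly ^ 2 * ‖yk2 - yk1‖ ^ 2 + Ly ^ 2 * ‖yk1 - yk‖ ^ 2 +
          (Lg + Lh) ^ 2 * (‖xk2 - xk1‖ ^ 2 + ‖yk1 - yk‖ ^ 2)) / (β * lamB) := by gcongr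
    _ = _ := by ring

end Iteration

theorem statement7_general {p q n : ℕ}
    (A : Matrix (Fin n) (Fin p) ℝ) (B : Matrix (Fin n) (Fin q) ℝ)
    (g : Vec p → Vec q → ℝ) (f : Vec p → ℝ) (h : Vec q → ℝ)
    (Lg Lh Lx Ly β Cm LA lamB : ℝ)
    (x : ℕ → Vec p) (y : ℕ → Vec q) (γ : ℕ → Vec n)
    -- Assumption 1
    (hh : LipschitzDifferentiable h Lh)
    (hg : LipschitzDifferentiable2 g Lg)
    (hrank : B.rank = q)
    (himg : Set.range (mv A) ⊆ Set.range (mv B))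
    -- extreme eigenvalues of AᵀA and BᵀB
    (hLA : IsLargestEigenvalue (Aᵀ * A) LA)
    (hlamB : IsSmallestEigenvalue (Bᵀ * B) lamB)
    (hβpos : 0 < β)
    -- Algorithm 1 iterations
    (hxmin : ∀ (k : ℕ) (x' : Vec p),
      fbar f g A B β Lx (x k) (y k) (γ k) (x (k + 1)) ≤
        fbar f g A B β Lx (x k) (y k) (γ k) x')
    (hymin : ∀ (k : ℕ) (y' : Vec q),
      hbar g h A B β Ly (x (k + 1)) (y k) (γ k) (y (k + 1)) ≤
        hbar g h A B β Ly (x (k + 1)) (y k) (γ k) y')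
    (hγup : ∀ k : ℕ, γ (k + 1) = γ k + β • (mv A (x (k + 1)) + mv B (y (k + 1)))) :
    ∀ k : ℕ, 1 ≤ k →
      (Lagr β g f h A B (x k) (y k) (γ k) + Cm * ‖y k - y (k - 1)‖ ^ 2) -
        (Lagr β g f h A B (x (k + 1)) (y (k + 1)) (γ (k + 1)) +
          Cm * ‖y (k + 1) - y k‖ ^ 2) ≥
      ((2 * Ly - (Lg + Lh)) / 2 - 3 * Ly ^ 2 / (β * lamB) - Cm) * ‖y (k + 1) - y k‖ ^ 2 +
        (Cm - 3 * ((Lg + Lh) ^ 2 + Ly ^ 2) / (β * lamB)) * ‖y k - y (k - 1)‖ ^ 2 +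
        ((Lx - Lg - β * LA) / 2 - 3 * (Lg + Lh) ^ 2 / (β * lamB)) * ‖x (k + 1) - x k‖ ^ 2 := by
  intro k hk
  obtain ⟨j, rfl⟩ : ∃ j, k = j + 1 := ⟨k - 1, by omega⟩
  rw [Nat.add_sub_cancel]
  -- only used as a nonzero vector of `ℝ^q`, which forces `0 ≤ Lh`
  obtain ⟨v, hv, -⟩ := hlamB.1
  have hLh : 0 ≤ Lh := hh.nonneg (a := WithLp.toLp 2 v) (b := 0) (by simpa using hv)
  have hdual : ∀ i, mv Bᵀ (γ (i + 1)) =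
      -(Ly • (y (i + 1) - y i) + grady g (x (i + 1)) (y i) + gradient h (y i)) :=
    fun i => mv_transpose_dual_eq (hymin i) (hγup i)
  have hxstep := lagr_x_update_le (h := h) hg hLA hβpos.le (hxmin (j + 1) (x (j + 1)))
  have hystep := lagr_y_update_le (f := f) hg hh hβpos.le (hymin (j + 1))
  have hres := mul_sq_norm_residual_le hg hh hLh hlamB (hlamB.pos_of_rank_eq hrank) hβpos himg
    (hdual j) (hdual (j + 1)) (hγup (j + 1))
  rw [hγup (j + 1), lagr_dual_update]
  linarith

theorem statement7 {p q n : ℕ}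
    (A : Matrix (Fin n) (Fin p) ℝ) (B : Matrix (Fin n) (Fin q) ℝ)
    (g : Vec p → Vec q → ℝ) (f : Vec p → ℝ) (h : Vec q → ℝ)
    (Lg Lh Lx Ly β Cm LA lamB : ℝ)
    (x : ℕ → Vec p) (y : ℕ → Vec q) (γ : ℕ → Vec n)
    -- Assumption 1
    (hh : LipschitzDifferentiable h Lh)
    (hg : LipschitzDifferentiable2 g Lg)
    (hlb : ∃ c : ℝ, ∀ (x' : Vec p) (y' : Vec q),
      mv A x' + mv B y' = 0 → c ≤ g x' y' + f x' + h y')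
    (hcoercive : ∀ (u : ℕ → Vec p) (v : ℕ → Vec q),
      (∀ k, mv A (u k) + mv B (v k) = 0) →
      Tendsto (fun k => ‖v k‖) atTop atTop →
      Tendsto (fun k => g (u k) (v k) + f (u k) + h (v k)) atTop atTop)
    (hrank : B.rank = q)
    (himg : Set.range (mv A) ⊆ Set.range (mv B))
    -- extreme eigenvalues of AᵀA and BᵀB
    (hLA : IsLargestEigenvalue (Aᵀ * A) LA)
    (hlamB : IsSmallestEigenvalue (Bᵀ * B) lamB)
    (hLxpos : 0 < Lx) (hLypos : 0 < Ly) (hβpos : 0 < β)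
    -- Algorithm 1 iterations
    (hxmin : ∀ (k : ℕ) (x' : Vec p),
      fbar f g A B β Lx (x k) (y k) (γ k) (x (k + 1)) ≤
        fbar f g A B β Lx (x k) (y k) (γ k) x')
    (hymin : ∀ (k : ℕ) (y' : Vec q),
      hbar g h A B β Ly (x (k + 1)) (y k) (γ k) (y (k + 1)) ≤
        hbar g h A B β Ly (x (k + 1)) (y k) (γ k) y')
    (hγup : ∀ k : ℕ, γ (k + 1) = γ k + β • (mv A (x (k + 1)) + mv B (y (k + 1)))) :
    ∀ k : ℕ, 1 ≤ k →
      (Lagr β g f h A B (x k) (y k) (γ k) + Cm * ‖y k - y (k - 1)‖ ^ 2) -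
        (Lagr β g f h A B (x (k + 1)) (y (k + 1)) (γ (k + 1)) +
          Cm * ‖y (k + 1) - y k‖ ^ 2) ≥
      ((2 * Ly - (Lg + Lh)) / 2 - 3 * Ly ^ 2 / (β * lamB) - Cm) * ‖y (k + 1) - y k‖ ^ 2 +
        (Cm - 3 * ((Lg + Lh) ^ 2 + Ly ^ 2) / (β * lamB)) * ‖y k - y (k - 1)‖ ^ 2 +
        ((Lx - Lg - β * LA) / 2 - 3 * (Lg + Lh) ^ 2 / (β * lamB)) * ‖x (k + 1) - x k‖ ^ 2 :=
  statement7_general A B g f h Lg Lh Lx Ly β Cm LA lamB x y γ hh hg hrank himg hLA hlamB hβpos hxmin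
    hymin hγup
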